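/- arXiv:1009.5932 — 3 statements merged into one kernel-verified Lean document; each statement's English description precedes it below -/
import Mathlib

section
/- Let C be an abelian category, let R be a nonzero object of C, and suppose that E is obtained by successive extensions of R of length s ≥ 1, via short exact sequences 0 → E_{i-1} →^{i_i} E_i →^{p_i} R → 0 for i = 1,…,s (with E_0 = R and E_s = E). Let ι = i_s ∘ ⋯ ∘ i_1 : R → E be the composite of the monomorphisms. Then the endomorphism φ = ι ∘ p_s of E is nonzero and satisfies φ ∘ φ = 0; in particular, E admits a nonzero endomorphism that is not an isomorphism. -/
open CategoryTheory

/-- The composite `E 0 ⟶ E s` of the monomorphisms in a chain of extensions. -/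
def extensionComposite {C : Type*} [Category C] (E : ℕ → C)
    (i : ∀ k, E k ⟶ E (k + 1)) : ∀ s, (E 0 ⟶ E s)
  | 0 => 𝟙 (E 0)
  | s + 1 => extensionComposite E i s ≫ i s

lemma extensionComposite_mono {C : Type*} [Category C] (E : ℕ → C)
    (i : ∀ k, E k ⟶ E (k + 1)) (s : ℕ) (h : ∀ k < s, Mono (i k)) :
    Mono (extensionComposite E i s) := by
  induction s with
  | zero => exact ⟨fun _ _ h => by simpa [extensionComposite] using h⟩
  | succ m ih =>
    have : Mono (extensionComposite E i m) := ih (fun k hk => h k (hk.trans (Nat.lt_succ_self m)))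
    have : Mono (i m) := h m (Nat.lt_succ_self m)
    exact mono_comp _ _

/-- If `E (n+1)` is obtained by successive extensions (of length
`n + 1 ≥ 1`) of the nonzero object `R = E 0` of an abelian category, via short exact
sequences `0 ⟶ E k ⟶ E (k+1) ⟶ R ⟶ 0`, then the endomorphism
`φ = ι ∘ pₛ` of `E (n+1)` (where `ι : R ⟶ E (n+1)` is the composite of the
monomorphisms) is nonzero and squares to zero; in particular `E (n+1)` admits a
nonzero endomorphism that is not an isomorphism. -/
theorem stmt0 {C : Type*} [Category C] [Abelian C]
    (n : ℕ) (E : ℕ → C) (hR : ¬ Limits.IsZero (E 0))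
    (i : ∀ k, E k ⟶ E (k + 1)) (p : ∀ k, E (k + 1) ⟶ E 0)
    (w : ∀ k, i k ≫ p k = 0)
    (hses : ∀ k ≤ n, (ShortComplex.mk (i k) (p k) (w k)).ShortExact) :
    p n ≫ extensionComposite E i (n + 1) ≠ 0 ∧
    (p n ≫ extensionComposite E i (n + 1)) ≫ (p n ≫ extensionComposite E i (n + 1)) = 0 ∧
    ∃ φ : E (n + 1) ⟶ E (n + 1), φ ≠ 0 ∧ ¬ IsIso φ := by
  have hmono : Mono (extensionComposite E i (n + 1)) := by
    refine extensionComposite_mono E i (n + 1) (fun k hk => ?_)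
    exact (hses k (Nat.lt_succ_iff.mp hk)).mono_f
  have hepi : Epi (p n) := (hses n le_rfl).epi_g
  have hne : p n ≫ extensionComposite E i (n + 1) ≠ 0 := by
    intro h
    have hp : p n = 0 := by
      rw [← cancel_mono (extensionComposite E i (n + 1))]
      simpa using h
    apply hR
    rw [Limits.IsZero.iff_id_eq_zero, ← cancel_epi (p n)]
    simp [hp]
  have hsq : (p n ≫ extensionComposite E i (n + 1)) ≫
      (p n ≫ extensionComposite E i (n + 1)) = 0 := by
    have : extensionComposite E i (n + 1) ≫ p n = 0 := by
      show (extensionComposite E i n ≫ i n) ≫ p n = 0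
      rw [Category.assoc, w n, Limits.comp_zero]
    rw [Category.assoc, ← Category.assoc (extensionComposite E i (n + 1)), this]
    simp
  refine ⟨hne, hsq, p n ≫ extensionComposite E i (n + 1), hne, fun hiso => ?_⟩
  apply hne
  rw [← cancel_epi (p n ≫ extensionComposite E i (n + 1))]
  simpa using hsq
end

section
/- Let k be a field and C a k-linear abelian category. Let L be a nonzero object of C such that every endomorphism of L is a k-scalar multiple of id_L. Let 0 → L →^{i} E →^{p} L → 0 and 0 → L →^{i'} E' →^{p'} L → 0 be non-split short exact sequences in C, and suppose E and E' are not isomorphic. Then every morphism φ : E → E' is of the form φ = c • (i' ∘ p) for some scalar c ∈ k; in particular, Hom(E, E') is a one-dimensional k-vector space spanned by the nonzero morphism i' ∘ p. -/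
open CategoryTheory

/-- Let `C` be a `k`-linear abelian category over a field `k`, and let
`L` be a nonzero object all of whose endomorphisms are scalar multiples of the identity.
Let `0 ⟶ L ⟶ E ⟶ L ⟶ 0` and `0 ⟶ L ⟶ E' ⟶ L ⟶ 0` be non-split
short exact sequences with `E` and `E'` not isomorphic. Then every morphism
`φ : E ⟶ E'` is a scalar multiple of the nonzero morphism `i' ∘ p = p ≫ i'`;
in particular `Hom(E, E')` is one-dimensional, spanned by `p ≫ i'`. -/
theorem stmt4 (k : Type*) [Field k] {C : Type*} [Category C] [Abelian C] [Linear k C]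
    (L E E' : C) (hL : ¬ Limits.IsZero L)
    (hEndL : ∀ f : L ⟶ L, ∃ a : k, f = a • 𝟙 L)
    (i : L ⟶ E) (p : E ⟶ L) (w : i ≫ p = 0)
    (hse : (ShortComplex.mk i p w).ShortExact)
    (hns : ¬ ∃ σ : L ⟶ E, σ ≫ p = 𝟙 L)
    (i' : L ⟶ E') (p' : E' ⟶ L) (w' : i' ≫ p' = 0)
    (hse' : (ShortComplex.mk i' p' w').ShortExact)
    (hns' : ¬ ∃ σ : L ⟶ E', σ ≫ p' = 𝟙 L)
    (hniso : ¬ Nonempty (E ≅ E')) :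
    p ≫ i' ≠ 0 ∧ ∀ φ : E ⟶ E', ∃ c : k, φ = c • (p ≫ i') := by
  have hm : Mono i := hse.mono_f
  have hep : Epi p := hse.epi_g
  have hm' : Mono i' := hse'.mono_f
  have hep' : Epi p' := hse'.epi_g
  constructor
  · intro h0
    have hi'0 : i' = 0 := by
      rw [← cancel_epi p, h0, Limits.comp_zero]
    apply hL
    rw [Limits.IsZero.iff_id_eq_zero, ← cancel_mono i', hi'0, Limits.comp_zero, Limits.zero_comp]
  · intro φ
    -- Step 1: i ≫ φ ≫ p' = 0
    obtain ⟨a, ha⟩ := hEndL (i ≫ φ ≫ p')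
    have ha0 : a = 0 := by
      by_contra hne
      exact hns' ⟨a⁻¹ • (i ≫ φ), by
        rw [Linear.smul_comp, Category.assoc, ha, smul_smul, inv_mul_cancel₀ hne, one_smul]⟩
    have hip0 : i ≫ (φ ≫ p') = 0 := by rw [ha, ha0, zero_smul]
    -- Step 2: factor φ ≫ p' = p ≫ g
    obtain ⟨g, hg⟩ := Limits.CokernelCofork.IsColimit.desc' hse.exact.gIsCokernel
      (φ ≫ p') hip0
    change p ≫ g = φ ≫ p' at hg
    obtain ⟨b, hb⟩ := hEndL g
    have hb0 : b = 0 := by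
      by_contra hbne
      set ψ : E ⟶ E' := b⁻¹ • φ with hψdef
      have hψ : ψ ≫ p' = p := by
        rw [hψdef, Linear.smul_comp, ← hg, hb, Linear.comp_smul, Category.comp_id,
          smul_smul, inv_mul_cancel₀ hbne, one_smul]
      have hiψ : (i ≫ ψ) ≫ p' = 0 := by rw [Category.assoc, hψ, w]
      obtain ⟨h, hh⟩ := Limits.KernelFork.IsLimit.lift' hse'.exact.fIsKernel (i ≫ ψ) hiψ
      change h ≫ i' = i ≫ ψ at hh
      obtain ⟨c, hc⟩ := hEndL h
      by_cases hc0 : c = 0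
      · -- ψ factors through p, giving a splitting of the second sequence
        have hiψ0 : i ≫ ψ = 0 := by rw [← hh, hc, hc0, zero_smul, Limits.zero_comp]
        obtain ⟨t, ht⟩ := Limits.CokernelCofork.IsColimit.desc' hse.exact.gIsCokernel ψ hiψ0
        change p ≫ t = ψ at ht
        refine hns' ⟨t, ?_⟩
        rw [← cancel_epi p, ← Category.assoc, ht, hψ, Category.comp_id]
      · -- five lemma: ψ is iso, contradiction with hniso
        have hIso1 : IsIso h := by
          rw [hc]
          exact ⟨⟨c⁻¹ • 𝟙 L, by simp [smul_smul, inv_mul_cancel₀ hc0, mul_inv_cancel₀ hc0],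
            by simp [smul_smul, inv_mul_cancel₀ hc0, mul_inv_cancel₀ hc0]⟩⟩
        have hIso3 : IsIso (𝟙 L) := inferInstance
        let Φ : ShortComplex.mk i p w ⟶ ShortComplex.mk i' p' w' :=
          { τ₁ := h
            τ₂ := ψ
            τ₃ := 𝟙 L
            comm₁₂ := hh
            comm₂₃ := by simpa using hψ }
        have : IsIso Φ.τ₂ := ShortComplex.isIso₂_of_shortExact_of_isIso₁₃' Φ hse hse' hIso1 hIso3
        exact hniso ⟨asIso ψ⟩
    -- Step 3: φ ≫ p' = 0, factor φ = u ≫ i'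
    have hφp' : φ ≫ p' = 0 := by rw [← hg, hb, hb0, zero_smul, Limits.comp_zero]
    obtain ⟨u, hu⟩ := Limits.KernelFork.IsLimit.lift' hse'.exact.fIsKernel φ hφp'
    change u ≫ i' = φ at hu
    obtain ⟨d, hd⟩ := hEndL (i ≫ u)
    have hd0 : d = 0 := by
      by_contra hdne
      have hfr : i ≫ (d⁻¹ • u) = 𝟙 L := by
        rw [Linear.comp_smul, hd, smul_smul, inv_mul_cancel₀ hdne, one_smul]
      have spl := ShortComplex.Splitting.ofExactOfRetraction (ShortComplex.mk i p w)
        hse.exact (d⁻¹ • u) hfr hep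
      exact hns ⟨spl.s, spl.s_g⟩
    have hiu0 : i ≫ u = 0 := by rw [hd, hd0, zero_smul]
    obtain ⟨e, he⟩ := Limits.CokernelCofork.IsColimit.desc' hse.exact.gIsCokernel u hiu0
    change p ≫ e = u at he
    obtain ⟨c, hc⟩ := hEndL e
    refine ⟨c, ?_⟩
    rw [← hu, ← he, hc, Category.assoc, Linear.smul_comp, Category.id_comp, Linear.comp_smul]
end

section
/- Let k be a field and C a k-linear abelian category. Let L be a nonzero object of C such that every endomorphism of L is a k-scalar multiple of id_L, and let 0 → L →^{i} E →^{p} L → 0 be a non-split short exact sequence. Then every endomorphism of E is of the form a • id_E + b • (i ∘ p) with a, b ∈ k; consequently End(E) is a commutative k-algebra of dimension 2 isomorphic to k[X]/(X²), and every endomorphism of E is either an isomorphism or has square equal to zero. -/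
/-!
Because `End L = k` and the sequence does not split, every `x : L ⟶ E` satisfies `x ≫ p = 0`
(a nonzero scalar `x ≫ p` would give a section), so `x` is a multiple of `i`. Applied to `i ≫ φ`
and to the map through which `φ - a • 𝟙 E` factors over `p`, this shows that `End E` is spanned by
`1` and `N = p ≫ i`, where `N * N = 0` and `N ≠ 0`. Any such algebra is the algebra of dual numbers
`k[X]/(X²)`: it is commutative and two-dimensional, and `a + b N` is a unit if `a ≠ 0` and squares
to zero if `a = 0`.
-/

open CategoryTheory Polynomial

lemma commute_of_forall_eq_smul_one_add_smul {k A : Type*} [CommSemiring k] [Semiring A]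
    [Algebra k A] {N : A} (hspan : ∀ x : A, ∃ a b : k, x = a • 1 + b • N) (x y : A) :
    Commute x y := by
  have hN : ∀ z : A, Commute N z := fun z => by
    obtain ⟨c, d, rfl⟩ := hspan z
    exact ((Commute.one_right N).smul_right c).add_right ((Commute.refl N).smul_right d)
  obtain ⟨a, b, rfl⟩ := hspan x
  exact ((Commute.one_left y).smul_left a).add_left ((hN y).smul_left b)

section SquareZero

variable {k A : Type*} [Field k] [Ring A] [Algebra k A] {N : A}

lemma linearIndependent_one_of_mul_self_eq_zero (hN : N * N = 0) (hN0 : N ≠ 0) :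
    LinearIndependent k ![(1 : A), N] := by
  refine LinearIndependent.pair_iff.2 fun s t hst => ?_
  have hs : s = 0 := by
    have := congrArg (· * N) hst
    simpa [add_mul, smul_mul_assoc, hN, hN0] using this
  subst hs
  simpa [hN0] using hst

variable (hN : N * N = 0) (hspan : ∀ x : A, ∃ a b : k, x = a • 1 + b • N)
include hN hspan

lemma rank_eq_two_of_mul_self_eq_zero (hN0 : N ≠ 0) : Module.rank k A = 2 := by
  have hsp : ⊤ ≤ Submodule.span k (Set.range ![(1 : A), N]) := fun x _ => by
    obtain ⟨a, b, rfl⟩ := hspan x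
    rw [Matrix.range_cons_cons_empty]
    exact Submodule.mem_span_pair.2 ⟨a, b, rfl⟩
  simpa using rank_eq_card_basis (.mk (linearIndependent_one_of_mul_self_eq_zero hN hN0) hsp)

lemma isUnit_or_mul_self_eq_zero (x : A) : IsUnit x ∨ x * x = 0 := by
  obtain ⟨a, b, rfl⟩ := hspan x
  have hsq : b • N * b • N = 0 := by rw [smul_mul_smul_comm, hN, smul_zero]
  rcases eq_or_ne a 0 with rfl | ha
  · right
    rwa [zero_smul, zero_add]
  · left
    have hnil : IsNilpotent (b • N) := ⟨2, by rwa [pow_two]⟩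
    rw [← Algebra.algebraMap_eq_smul_one]
    exact hnil.isUnit_add_left_of_commute (ha.isUnit.map _) (Algebra.commutes _ _).symm

lemma nonempty_algEquiv_quotient_span_X_sq (hN0 : N ≠ 0) :
    Nonempty ((k[X] ⧸ Ideal.span {(X : k[X]) ^ 2}) ≃ₐ[k] A) := by
  let f := Ideal.Quotient.liftₐ (Ideal.span {(X : k[X]) ^ 2}) (aeval N) fun q hq => by
    obtain ⟨s, rfl⟩ := Ideal.mem_span_singleton'.1 hq
    rw [map_mul, map_pow, aeval_X, pow_two, hN, mul_zero]
  have hsurj : Function.Surjective f := fun x => by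
    obtain ⟨a, b, rfl⟩ := hspan x
    refine ⟨Ideal.Quotient.mk _ (C a + C b * X), ?_⟩
    change aeval N (C a + C b * X) = _
    simp [Algebra.smul_def]
  have hA : Module.finrank k A = 2 :=
    Module.finrank_eq_of_rank_eq (rank_eq_two_of_mul_self_eq_zero hN hspan hN0)
  have hQ : Module.finrank k (k[X] ⧸ Ideal.span {(X : k[X]) ^ 2}) = 2 := by
    rw [finrank_quotient_span_eq_natDegree, natDegree_X_pow]
  have := Module.finite_of_finrank_eq_succ hA
  have := Module.finite_of_finrank_eq_succ hQ
  have hinj : Function.Injective f :=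
    (LinearMap.injective_iff_surjective_of_finrank_eq_finrank (hQ.trans hA.symm)
      (f := f.toLinearMap)).2 hsurj
  exact ⟨.ofBijective f ⟨hinj, hsurj⟩⟩

end SquareZero

lemma comp_eq_zero_of_not_exists_section {k : Type*} [Field k] {C : Type*} [Category C]
    [Preadditive C] [Linear k C] {L E : C} (hEndL : ∀ f : L ⟶ L, ∃ a : k, f = a • 𝟙 L)
    {p : E ⟶ L} (hns : ¬ ∃ σ : L ⟶ E, σ ≫ p = 𝟙 L) (x : L ⟶ E) : x ≫ p = 0 := by
  obtain ⟨c, hc⟩ := hEndL (x ≫ p)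
  rcases eq_or_ne c 0 with rfl | hc0
  · rwa [zero_smul] at hc
  · refine (hns ⟨c⁻¹ • x, ?_⟩).elim
    rw [Linear.smul_comp, hc, smul_smul, inv_mul_cancel₀ hc0, one_smul]

section NonSplitSelfExtension

variable {k : Type*} [Field k] {C : Type*} [Category C] [Abelian C] [Linear k C]
  {L E : C} {i : L ⟶ E} {p : E ⟶ L} {w : i ≫ p = 0}

lemma exists_eq_smul_of_shortExact (hse : (ShortComplex.mk i p w).ShortExact)
    (hEndL : ∀ f : L ⟶ L, ∃ a : k, f = a • 𝟙 L) (hns : ¬ ∃ σ : L ⟶ E, σ ≫ p = 𝟙 L)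
    (x : L ⟶ E) : ∃ a : k, x = a • i := by
  have := hse.mono_f
  obtain ⟨l, rfl⟩ := hse.exact.lift' x (comp_eq_zero_of_not_exists_section hEndL hns x)
  obtain ⟨a, rfl⟩ := hEndL l
  exact ⟨a, by simp⟩

lemma exists_eq_smul_id_add_smul_of_shortExact (hse : (ShortComplex.mk i p w).ShortExact)
    (hEndL : ∀ f : L ⟶ L, ∃ a : k, f = a • 𝟙 L) (hns : ¬ ∃ σ : L ⟶ E, σ ≫ p = 𝟙 L)
    (φ : E ⟶ E) : ∃ a b : k, φ = a • 𝟙 E + b • (p ≫ i) := by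
  have := hse.epi_g
  obtain ⟨a, ha⟩ := exists_eq_smul_of_shortExact hse hEndL hns (i ≫ φ)
  obtain ⟨h, hh⟩ := hse.exact.desc' (φ - a • 𝟙 E) (by simp [ha])
  obtain ⟨b, rfl⟩ := exists_eq_smul_of_shortExact hse hEndL hns h
  refine ⟨a, b, ?_⟩
  rw [← Linear.comp_smul, show p = (ShortComplex.mk i p w).g from rfl, hh]
  abel

lemma comp_ne_zero_of_shortExact (hL : ¬ Limits.IsZero L)
    (hse : (ShortComplex.mk i p w).ShortExact) : p ≫ i ≠ 0 := by
  have := hse.mono_f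
  have := hse.epi_g
  intro h
  refine hL (Limits.IsZero.of_mono_eq_zero i ?_)
  rw [← cancel_epi p, h, Limits.comp_zero]

end NonSplitSelfExtension

/-- Let `C` be a `k`-linear abelian category over a field `k`, let `L`
be a nonzero object all of whose endomorphisms are scalar multiples of the identity, and
let `0 ⟶ L ⟶ E ⟶ L ⟶ 0` be a non-split short exact sequence. Then every
endomorphism of `E` has the form `a • 𝟙 E + b • (p ≫ i)`; consequently `End E` is a
commutative `k`-algebra of dimension `2`, isomorphic to `k[X]/(X²)`, and every
endomorphism of `E` is either an isomorphism or has square zero. -/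
theorem stmt5 (k : Type*) [Field k] {C : Type*} [Category C] [Abelian C] [Linear k C]
    (L E : C) (hL : ¬ Limits.IsZero L)
    (hEndL : ∀ f : L ⟶ L, ∃ a : k, f = a • 𝟙 L)
    (i : L ⟶ E) (p : E ⟶ L) (w : i ≫ p = 0)
    (hse : (ShortComplex.mk i p w).ShortExact)
    (hns : ¬ ∃ σ : L ⟶ E, σ ≫ p = 𝟙 L) :
    (∀ φ : E ⟶ E, ∃ a b : k, φ = a • 𝟙 E + b • (p ≫ i)) ∧
    (∀ f g : E ⟶ E, f ≫ g = g ≫ f) ∧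
    Module.rank k (E ⟶ E) = 2 ∧
    Nonempty ((Polynomial k ⧸ Ideal.span {(X : Polynomial k) ^ 2}) ≃ₐ[k] End E) ∧
    (∀ φ : E ⟶ E, IsIso φ ∨ φ ≫ φ = 0) := by
  let N : End E := p ≫ i
  have hspan : ∀ φ : End E, ∃ a b : k, φ = a • 1 + b • N :=
    exists_eq_smul_id_add_smul_of_shortExact hse hEndL hns
  have hN : N * N = 0 := by simp [N, End.mul_def, reassoc_of% w]
  have hN0 : N ≠ 0 := comp_ne_zero_of_shortExact hL hse
  refine ⟨hspan, fun f g => (commute_of_forall_eq_smul_one_add_smul hspan g f).eq,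
    rank_eq_two_of_mul_self_eq_zero hN hspan hN0,
    nonempty_algEquiv_quotient_span_X_sq hN hspan hN0, fun φ => ?_⟩
  rw [← isUnit_iff_isIso]
  exact isUnit_or_mul_self_eq_zero hN hspan φ
end
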